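/- Let (Γ,μ) be a weighted graph satisfying (p0) and (VD), and let F∈W0 be such that the diagonal upper estimate DUE(F) holds. Then there is a c>0 such that for all x∈Γ and R>0, λ(x,R) ≥ c/F(x,R). -/

import Mathlib

open scoped Classical BigOperators

noncomputable section

/-- A weighted graph: a countable infinite connected graph with symmetric
positive edge weights on edges. -/
structure WGraph (Γ : Type*) where
  adj : Γ → Γ → Prop
  adj_symm : ∀ x y, adj x y → adj y x
  w : Γ → Γ → ℝ
  w_symm : ∀ x y, w x y = w y x
  w_pos : ∀ x y, adj x y → 0 < w x y
  w_zero : ∀ x y, ¬ adj x y → w x y = 0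
  connected : ∀ x y, Relation.ReflTransGen adj x y
  inf : Infinite Γ
  cnt : Countable Γ

namespace WGraph

variable {Γ : Type*}

/-- n-fold adjacency: there is a path of length n. -/
def adjN (G : WGraph Γ) : ℕ → Γ → Γ → Prop
  | 0 => fun x y => x = y
  | (n+1) => fun x y => ∃ z, G.adj x z ∧ adjN G n z y

variable (G : WGraph Γ)

/-- μ(x) = Σ_{y} μ_{x,y}. -/
def vtx (x : Γ) : ℝ := ∑' y, G.w x y

/-- μ(A) for a set of vertices. -/
def setVol (A : Set Γ) : ℝ := ∑' y : A, G.vtx y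

/-- graph (shortest path) distance. -/
def dist (x y : Γ) : ℕ := sInf {n | G.adjN n x y}

/-- open metric ball B(x,r). -/
def ball (x : Γ) (r : ℝ) : Set Γ := {y | (G.dist x y : ℝ) < r}

/-- V(x,r) = μ(B(x,r)). -/
def vol (x : Γ) (r : ℝ) : ℝ := G.setVol (G.ball x r)

/-- one-step transition probability P(x,y) = μ_{xy}/μ(x). -/
def kerP (x y : Γ) : ℝ := G.w x y / G.vtx x

/-- n-step transition probability of the walk killed outside A. -/
def killedP (G : WGraph Γ) (A : Set Γ) : ℕ → Γ → Γ → ℝ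
  | 0 => fun x y => if x = y ∧ x ∈ A then 1 else 0
  | (n+1) => fun x y => if x ∈ A then ∑' z, G.kerP x z * killedP G A n z y else 0

/-- P_n(x,y). -/
def transP (n : ℕ) (x y : Γ) : ℝ := G.killedP Set.univ n x y

/-- heat kernel p_n(x,y) = P_n(x,y)/μ(y). -/
def hk (n : ℕ) (x y : Γ) : ℝ := G.transP n x y / G.vtx y

/-- p̃_n = p_n + p_{n+1}. -/
def hkt (n : ℕ) (x y : Γ) : ℝ := G.hk n x y + G.hk (n+1) x y

/-- Dirichlet heat kernel p_n^A. -/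
def hkA (A : Set Γ) (n : ℕ) (x y : Γ) : ℝ := G.killedP A n x y / G.vtx y

/-- p̃_n^A = p_n^A + p_{n+1}^A. -/
def hktA (A : Set Γ) (n : ℕ) (x y : Γ) : ℝ := G.hkA A n x y + G.hkA A (n+1) x y

/-- local Green function G^A(x,y) = Σ_k P_k^A(x,y). -/
def greenF (A : Set Γ) (x y : Γ) : ℝ := ∑' n, G.killedP A n x y

/-- local Green kernel g^A(x,y) = G^A(x,y)/μ(y). -/
def greenK (A : Set Γ) (x y : Γ) : ℝ := G.greenF A x y / G.vtx y

/-- mean exit time E_x(A) = Σ_{y∈A} G^A(x,y). -/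
def exitE (A : Set Γ) (x : Γ) : ℝ := ∑' y : A, G.greenF A x y

/-- E(x,r) = E_x(B(x,r)). -/
def meanE (x : Γ) (r : ℝ) : ℝ := G.exitE (G.ball x r) x

/-- the mean exit time as a function Γ × ℕ → ℝ. -/
def EF : Γ → ℕ → ℝ := fun x R => G.meanE x (R : ℝ)

/-- Ē(x,r) = max_{y ∈ B(x,r)} E_y(B(x,r)). -/
def maxE (x : Γ) (r : ℝ) : ℝ :=
  sSup {e | ∃ y ∈ G.ball x r, e = G.exitE (G.ball x r) y}

/-- Markov operator P. -/
def Pop (u : Γ → ℝ) (x : Γ) : ℝ := ∑' y, G.kerP x y * u y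

/-- Markov operator of the killed walk. -/
def PopB (B : Set Γ) (u : Γ → ℝ) (x : Γ) : ℝ :=
  ∑' y, if y ∈ B then G.kerP x y * u y else 0

/-- Dirichlet Laplacian Δ^B = P^B - I. -/
def lapB (B : Set Γ) (u : Γ → ℝ) (x : Γ) : ℝ := G.PopB B u x - u x

/-- Dirichlet form E(f,f). -/
def dform (f : Γ → ℝ) : ℝ :=
  (1/2) * ∑' p : Γ × Γ, G.w p.1 p.2 * (f p.1 - f p.2)^2

/-- effective resistance between disjoint sets. -/
def res (A B : Set Γ) : ℝ :=
  (sInf {e | ∃ f : Γ → ℝ, (∀ x ∈ A, f x = 1) ∧ (∀ x ∈ B, f x = 0) ∧ e = G.dform f})⁻¹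

/-- ρ(x,r,R), resistance of the annulus. -/
def resA (x : Γ) (r R : ℝ) : ℝ := G.res (G.ball x r) (G.ball x R)ᶜ

/-- v(x,r,R) = V(x,R) - V(x,r). -/
def volA (x : Γ) (r R : ℝ) : ℝ := G.vol x R - G.vol x r

/-- smallest Dirichlet eigenvalue λ(A) of -Δ^A. -/
def lam (A : Set Γ) : ℝ :=
  sInf {e | ∃ f : Γ → ℝ, f ≠ 0 ∧ (∀ x ∉ A, f x = 0) ∧
        e = G.dform f / (∑' x, (f x)^2 * G.vtx x)}

/-- Σ_{y∈A} v(y) μ(y). -/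
def wsum (A : Set Γ) (v : Γ → ℝ) : ℝ := ∑' y : A, v y * G.vtx y

/-- space-time sum Σ_{a ≤ i ≤ b} Σ_{y∈A} u_i(y) μ(y). -/
def stsum (A : Set Γ) (a b : ℝ) (u : ℕ → Γ → ℝ) : ℝ :=
  ∑' i : ℕ, if a ≤ (i:ℝ) ∧ (i:ℝ) ≤ b then G.wsum A (u i) else 0

/-! ### Conditions -/

/-- (p0): controlled weights. -/
def p0cond : Prop := ∃ p > (0:ℝ), ∀ x y, G.adj x y → p ≤ G.kerP x y

/-- (VD): volume doubling. -/
def VD : Prop := ∃ D > (0:ℝ), ∀ (x : Γ) (R : ℝ), 0 < R → G.vol x (2*R) ≤ D * G.vol x R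

/-- u is harmonic on A. -/
def harmOn (u : Γ → ℝ) (A : Set Γ) : Prop := ∀ x ∈ A, G.Pop u x = u x

/-- (H): elliptic Harnack inequality. -/
def EH : Prop := ∃ C > (0:ℝ), ∀ (x : Γ) (R : ℕ), 0 < R →
  ∀ u : Γ → ℝ, (∀ y, 0 ≤ u y) → G.harmOn u (G.ball x (2*(R:ℝ))) →
    ∀ y ∈ G.ball x (R:ℝ), ∀ z ∈ G.ball x (R:ℝ), u y ≤ C * u z

/-- (wTC): weak time comparison principle. -/
def wTC : Prop := ∃ C > (1:ℝ), ∀ (x y : Γ) (R : ℕ), 0 < R → G.dist x y < R →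
  G.meanE x (R:ℝ) ≤ C * G.meanE y (R:ℝ)

/-- (TC): time comparison principle. -/
def TC : Prop := ∃ C > (1:ℝ), ∀ (x y : Γ) (R : ℕ), 0 < R → G.dist x y < R →
  G.meanE x (2*(R:ℝ)) ≤ C * G.meanE y (R:ℝ)

/-- (ER): the Einstein relation E(x,2R) ≃ ρ(x,R,2R)v(x,R,2R). -/
def ER : Prop := ∃ C > (1:ℝ), ∀ (x : Γ) (R : ℕ), 0 < R →
  G.meanE x (2*(R:ℝ)) ≤ C * (G.resA x (R:ℝ) (2*(R:ℝ)) * G.volA x (R:ℝ) (2*(R:ℝ))) ∧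
  G.resA x (R:ℝ) (2*(R:ℝ)) * G.volA x (R:ℝ) (2*(R:ℝ)) ≤ C * G.meanE x (2*(R:ℝ))

/-- (aDρv): anti-doubling for the resistance-volume product. -/
def aDrv : Prop := ∃ c > (0:ℝ), ∃ b > (0:ℝ), ∀ (x : Γ) (r R : ℕ), 0 < r → r < R →
  c * ((R:ℝ)/(r:ℝ)) ^ b * (G.resA x (r:ℝ) (2*(r:ℝ)) * G.volA x (r:ℝ) (2*(r:ℝ)))
    ≤ G.resA x (R:ℝ) (2*(R:ℝ)) * G.volA x (R:ℝ) (2*(R:ℝ))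

/-- RLE(E): resistance lower estimate w.r.t. the mean exit time. -/
def RLE_E : Prop := ∃ c > (0:ℝ), ∀ (x : Γ) (R : ℕ), 0 < R →
  c * G.meanE x (2*(R:ℝ)) / G.vol x (2*(R:ℝ)) ≤ G.resA x (R:ℝ) (2*(R:ℝ))

/-- the two-sided regularity (w1) of a space-time scaling function,
with exponents β (upper) and β' (lower). -/
def W0reg (F : Γ → ℕ → ℝ) (β β' : ℝ) : Prop :=
  ∃ cF > (0:ℝ), ∃ CF > (0:ℝ), ∀ (x y : Γ) (R r : ℕ), 0 < r → r < R → G.dist x y < R →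
    cF * ((R:ℝ)/(r:ℝ)) ^ β' ≤ F x R / F y r ∧ F x R / F y r ≤ CF * ((R:ℝ)/(r:ℝ)) ^ β

/-- F ∈ W₀. -/
def memW0 (F : Γ → ℕ → ℝ) : Prop :=
  (∃ β > (1:ℝ), ∃ β' > (0:ℝ), G.W0reg F β β') ∧
  (∃ c > (0:ℝ), ∀ (x : Γ) (R : ℕ), c * (R:ℝ)^2 ≤ F x R) ∧
  (∀ (x : Γ) (R : ℕ), F x R + 1 ≤ F x (R+1))

/-- F ∈ W₁ (β' > 1). -/
def memW1 (F : Γ → ℕ → ℝ) : Prop :=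
  (∃ β > (1:ℝ), ∃ β' > (1:ℝ), G.W0reg F β β') ∧
  (∃ c > (0:ℝ), ∀ (x : Γ) (R : ℕ), c * (R:ℝ)^2 ≤ F x R) ∧
  (∀ (x : Γ) (R : ℕ), F x R + 1 ≤ F x (R+1))

/-- generalized inverse f(x,n) = min{R ∈ ℕ : F(x,R) ≥ n}. -/
def invF' (F : Γ → ℕ → ℝ) (x : Γ) (n : ℕ) : ℕ := sInf {R : ℕ | (n:ℝ) ≤ F x R}

/-- g(F): two-sided bound for the Green kernel on annuli. -/
def gF (F : Γ → ℕ → ℝ) : Prop :=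
  ∃ c > (0:ℝ), ∃ C > (0:ℝ), ∀ (x : Γ) (R : ℕ), 0 < R → ∀ y : Γ,
    y ∈ G.ball x (R:ℝ) → y ∉ G.ball x ((R:ℝ)/2) →
      G.greenK (G.ball x (2*(R:ℝ))) x y ≤ C * F x (2*R) / G.vol x (2*(R:ℝ)) ∧
      c * F x (2*R) / G.vol x (2*(R:ℝ)) ≤ G.greenK (G.ball x (2*(R:ℝ))) x y

/-- DUE(F): diagonal upper estimate. -/
def DUE (F : Γ → ℕ → ℝ) : Prop :=
  ∃ C > (0:ℝ), ∀ (x : Γ) (n : ℕ), 0 < n → G.hk n x x ≤ C / G.vol x (invF' F x n : ℝ)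

/-- UE(F): (sub-Gaussian) heat kernel upper estimate. -/
def UE (F : Γ → ℕ → ℝ) : Prop :=
  ∃ C > (1:ℝ), ∃ β > (1:ℝ), ∃ c > (0:ℝ), ∀ (x y : Γ) (n : ℕ), 0 < n →
    G.hk n x y ≤ C / G.vol x (invF' F x n : ℝ) *
      Real.exp (-(c * (F x (G.dist x y) / n) ^ (1/(β-1))))

/-- PLE(F): particular lower estimate for the Dirichlet heat kernel. -/
def PLE (F : Γ → ℕ → ℝ) : Prop :=
  ∃ c δ ε : ℝ, 0 < c ∧ c < 1 ∧ 0 < δ ∧ δ < 1 ∧ 0 < ε ∧ ε < 1 ∧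
    ∀ (x : Γ) (R : ℕ), 0 < R → ∀ (n : ℕ) (y : Γ),
      (n:ℝ) ≤ ε * F x R →
      (G.dist x y : ℝ) < min (n:ℝ) (δ * (invF' F x n : ℝ)) →
        c / G.vol x (invF' F x n : ℝ) ≤ G.hktA (G.ball x (R:ℝ)) n x y

/-- NDLE(F): near diagonal lower estimate. -/
def NDLE (F : Γ → ℕ → ℝ) : Prop :=
  ∃ c > (0:ℝ), ∃ δ > (0:ℝ), ∀ (x y : Γ) (n : ℕ), 0 < n →
    (G.dist x y : ℝ) < min (δ * (invF' F x n : ℝ)) (n:ℝ) →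
      c / G.vol x (invF' F x n : ℝ) ≤ G.hkt n x y

/-- LE(F): off-diagonal lower estimate. -/
def LE (F : Γ → ℕ → ℝ) : Prop :=
  ∃ C > (1:ℝ), ∃ β' > (1:ℝ), ∃ c > (0:ℝ), ∀ (x y : Γ) (n : ℕ), G.dist x y ≤ n →
    c / G.vol x (invF' F x n : ℝ) *
        Real.exp (-(C * (F x (G.dist x y) / n) ^ (1/(β'-1))))
      ≤ G.hkt n x y

/-- u is a nonnegative Dirichlet sub-solution of the heat equation
on [0,T] × B. -/
def subSolOn (B : Set Γ) (T : ℝ) (u : ℕ → Γ → ℝ) : Prop :=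
  (∀ n y, 0 ≤ u n y) ∧
  ∀ (n : ℕ) (y : Γ), y ∈ B → (n:ℝ) < T → u (n+1) y - u n y ≤ G.lapB B (u n) y

/-- u is a nonnegative Dirichlet super-solution of the heat equation
on [0,T] × B. -/
def supSolOn (B : Set Γ) (T : ℝ) (u : ℕ → Γ → ℝ) : Prop :=
  (∀ n y, 0 ≤ u n y) ∧
  ∀ (n : ℕ) (y : Γ), y ∈ B → (n:ℝ) < T → G.lapB B (u n) y ≤ u (n+1) y - u n y

/-- PMV_δ(F) with constants c1 < c2 < c3 < c4 ≤ c5: parabolic mean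
value inequality. -/
def PMVd (F : Γ → ℕ → ℝ) (δ c1 c2 c3 c4 c5 : ℝ) : Prop :=
  ∃ C > (1:ℝ), ∀ (x : Γ) (R : ℕ), 0 < R →
    ∀ u : ℕ → Γ → ℝ, G.subSolOn (G.ball x (R:ℝ)) (c5 * F x R) u →
      ∀ (n : ℕ) (y : Γ), y ∈ G.ball x (δ * R) →
        c3 * F x R ≤ (n:ℝ) → (n:ℝ) ≤ c4 * F x R →
          u n y ≤ C / ((c2 - c1) * F x R * G.vol x (δ * R)) *
            G.stsum (G.ball x (δ * R)) (c1 * F x R) (c2 * F x R) u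

/-- PMV(F) = PMV_1(F) for all admissible constants. -/
def PMV (F : Γ → ℕ → ℝ) : Prop :=
  ∀ c1 c2 c3 c4 c5 : ℝ, 0 ≤ c1 → c1 < c2 → c2 < c3 → c3 < c4 → c4 ≤ c5 →
    G.PMVd F 1 c1 c2 c3 c4 c5

/-- PSMV(F): parabolic super mean value inequality. -/
def PSMV (F : Γ → ℕ → ℝ) : Prop :=
  ∃ ε : ℝ, 0 < ε ∧ ε < 1 ∧
    ∀ c1 c2 c3 c4 c5 : ℝ, 0 < c1 → c1 < c2 → c2 < c3 → c3 < c4 → c4 ≤ c5 →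
      c4 - c1 < ε →
      ∃ δ > (0:ℝ), ∃ c > (0:ℝ), ∀ (x : Γ) (R : ℕ), 0 < R →
        ∀ u : ℕ → Γ → ℝ, G.supSolOn (G.ball x (R:ℝ)) (c5 * F x R) u →
          ∀ (k : ℕ) (y : Γ), y ∈ G.ball x (δ * R) →
            c3 * F x R ≤ (k:ℝ) → (k:ℝ) ≤ c4 * F x R →
              c / ((c2 - c1) * F x R * G.vol x (δ * R)) *
                  G.stsum (G.ball x (δ * R)) (c1 * F x R) (c2 * F x R)
                    (fun i z => u i z + u (i+1) z)
                ≤ u k y + u (k+1) y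

/-- u solves the heat equation ∂ₙu = Δu on [a,b) × B. -/
def solOn (B : Set Γ) (a b : ℝ) (u : ℕ → Γ → ℝ) : Prop :=
  (∀ n y, 0 ≤ u n y) ∧
  ∀ (n : ℕ) (y : Γ), y ∈ B → a ≤ (n:ℝ) → (n:ℝ) < b → u (n+1) y = G.Pop (u n) y

/-- PH(F): parabolic Harnack inequality. -/
def PH (F : Γ → ℕ → ℝ) : Prop :=
  ∃ C > (0:ℝ), ∀ (x : Γ) (R k : ℕ), 0 < R →
    ∀ u : ℕ → Γ → ℝ, G.solOn (G.ball x (2*(R:ℝ))) (k:ℝ) ((k:ℝ) + F x R) u →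
      ∀ (nm np : ℕ) (xm xp : Γ), xm ∈ G.ball x (R:ℝ) → xp ∈ G.ball x (R:ℝ) →
        (k:ℝ) + F x R / 4 ≤ (nm:ℝ) → (nm:ℝ) ≤ (k:ℝ) + F x R / 2 →
        (k:ℝ) + 3 * F x R / 4 ≤ (np:ℝ) → (np:ℝ) < (k:ℝ) + F x R →
        (G.dist xm xp : ℝ) ≤ (np:ℝ) - (nm:ℝ) →
          u nm xm ≤ C * (u np xp + u (np+1) xp)

/-- (MV): elliptic mean value inequality. -/
def MV : Prop := ∃ C > (0:ℝ), ∀ (x : Γ) (R : ℕ), 0 < R →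
  ∀ u : Γ → ℝ, (∀ y, 0 ≤ u y) → G.harmOn u (G.ball x (R:ℝ)) →
    u x ≤ C / G.vol x (R:ℝ) * G.wsum (G.ball x (R:ℝ)) u

/-- the set of integers k eligible in the definition of the local
sub-Gaussian upper exponent k_x(n,R). -/
def kSet (F : Γ → ℕ → ℝ) (q : ℝ) (x : Γ) (n R : ℕ) : Set ℕ :=
  {k | 1 ≤ k ∧ ∀ y : Γ, G.dist x y < R → (n:ℝ)/(k:ℝ) ≤ q * F y (R / k)}

/-- k = k_x(n,R): the maximal eligible integer, or 1 if there is none. -/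
def isKexp (F : Γ → ℕ → ℝ) (q : ℝ) (x : Γ) (n R k : ℕ) : Prop :=
  (k ∈ G.kSet F q x n R ∧ ∀ j ∈ G.kSet F q x n R, j ≤ k) ∨
  (G.kSet F q x n R = ∅ ∧ k = 1)

/-- the set of integers l eligible in the definition of l_x(n,R). -/
def lSet' (F : Γ → ℕ → ℝ) (Cl : ℝ) (x : Γ) (n R : ℕ) : Set ℕ :=
  {l | 1 ≤ l ∧ l ≤ n ∧ Cl * F x ((R + l - 1) / l) ≤ (n:ℝ)/(l:ℝ)}

/-- l = l_x(n,R): the minimal eligible integer, or n if there is none. -/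
def isLexp (F : Γ → ℕ → ℝ) (Cl : ℝ) (x : Γ) (n R l : ℕ) : Prop :=
  (l ∈ lSet' F Cl x n R ∧ ∀ j ∈ lSet' F Cl x n R, l ≤ j) ∨
  (lSet' F Cl x n R = ∅ ∧ l = n)

end WGraph

/-!
For `f` supported in `B = B(x, R)` put `Q k = (f, P_k f)_μ`. Reversibility of the walk makes
`Q (a + b)` the inner product of `P_a f` and `P_b f`, so `Q` is log-convex by Cauchy–Schwarz;
as `Q 0 = ‖f‖²` and `Q 1 = ‖f‖² - E(f)`, this gives `Q (2n) ≥ (1 - E(f) / ‖f‖²) ^ (2n) ‖f‖²`.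
On the other hand `Q (2n) ≤ max_B p_{2n}(y, y) · μ(B) · ‖f‖²`. By (DUE), reverse volume doubling
and the upper regularity of `F`, some `n ≃ F(x, R)` makes `p_{2n}(y, y) ≤ 1 / (2 V(x, R))` on
`B`; then `(1 - E(f) / ‖f‖²) ^ (2n) ≤ 1 / 2`, and Bernoulli's inequality gives
`E(f) ≥ ‖f‖² / (4n)`.
-/

lemma tsum_tsum_eq_sum_sum {α β M : Type*} [AddCommMonoid M] [TopologicalSpace M]
    {f : α → β → M} (s : Finset α) (t : Finset β) (hf : ∀ a b, f a b ≠ 0 → a ∈ s ∧ b ∈ t) :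
    ∑' a, ∑' b, f a b = ∑ a ∈ s, ∑ b ∈ t, f a b := by
  rw [tsum_eq_sum (s := s) fun a ha => ?_]
  · exact Finset.sum_congr rfl fun a _ =>
      tsum_eq_sum fun b hb => by_contra fun h => hb (hf a b h).2
  · exact (tsum_congr fun b => by_contra fun h => ha (hf a b h).1).trans tsum_zero

namespace WGraph

variable {Γ : Type*} (G : WGraph Γ)

lemma w_nonneg (x y : Γ) : 0 ≤ G.w x y := by
  by_cases h : G.adj x y
  · exact (G.w_pos x y h).le
  · exact (G.w_zero x y h).ge

lemma vtx_nonneg (x : Γ) : 0 ≤ G.vtx x := tsum_nonneg (G.w_nonneg x)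

lemma kerP_nonneg (x y : Γ) : 0 ≤ G.kerP x y :=
  div_nonneg (G.w_nonneg x y) (G.vtx_nonneg x)

lemma kerP_eq_zero_of_not_adj {x y : Γ} (h : ¬ G.adj x y) : G.kerP x y = 0 := by
  rw [kerP, G.w_zero x y h, zero_div]

lemma exists_adj (x : Γ) : ∃ y, G.adj x y := by
  have := G.inf
  obtain ⟨y, hy⟩ := exists_ne x
  rcases (G.connected x y).cases_head with h | ⟨z, hz, -⟩
  · exact absurd h.symm hy
  · exact ⟨z, hz⟩

lemma vtx_pos (hp : G.p0cond) (x : Γ) : 0 < G.vtx x := by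
  obtain ⟨p, hp, hker⟩ := hp
  obtain ⟨y, hy⟩ := G.exists_adj x
  refine (G.vtx_nonneg x).lt_of_ne fun h => ?_
  have := hker x y hy
  rw [kerP, ← h, div_zero] at this
  exact this.not_gt hp

-- By (p0) every edge weight at `x` is at least `p μ(x)`, while the weights at `x` are summable.
lemma adj_finite (hp : G.p0cond) (x : Γ) : {y | G.adj x y}.Finite := by
  have hpos := G.vtx_pos hp x
  obtain ⟨p, hp, hker⟩ := hp
  have hsum : Summable (G.w x) := by
    by_contra h
    rw [vtx, tsum_eq_zero_of_not_summable h] at hpos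
    exact hpos.false
  have hsmall : ∀ᶠ y in Filter.cofinite, G.w x y < p * G.vtx x :=
    hsum.tendsto_cofinite_zero.eventually (eventually_lt_nhds (mul_pos hp hpos))
  refine (Filter.eventually_cofinite.1 hsmall).subset fun y hy => not_lt.2 ?_
  have := hker x y hy
  rwa [kerP, le_div_iff₀ hpos] at this

lemma adjN_add (m n : ℕ) (x z : Γ) :
    G.adjN (m + n) x z ↔ ∃ y, G.adjN m x y ∧ G.adjN n y z := by
  induction m generalizing x with
  | zero => simp [adjN]
  | succ m ih =>
    rw [show m + 1 + n = (m + n) + 1 by omega]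
    constructor
    · rintro ⟨a, ha, h⟩
      obtain ⟨y, h1, h2⟩ := (ih a).1 h
      exact ⟨y, ⟨a, ha, h1⟩, h2⟩
    · rintro ⟨y, ⟨a, ha, h1⟩, h2⟩
      exact ⟨a, ha, (ih a).2 ⟨y, h1, h2⟩⟩

lemma adjN_one (x y : Γ) : G.adjN 1 x y ↔ G.adj x y :=
  ⟨fun ⟨_, hz, h⟩ => h ▸ hz, fun h => ⟨y, h, rfl⟩⟩

lemma adjN_symm {n : ℕ} {x y : Γ} (h : G.adjN n x y) : G.adjN n y x := by
  induction n generalizing x y with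
  | zero => exact h.symm
  | succ n ih =>
    obtain ⟨z, hz, h⟩ := h
    exact (G.adjN_add n 1 y x).2 ⟨z, ih h, (G.adjN_one z x).2 (G.adj_symm x z hz)⟩

lemma exists_adjN (x y : Γ) : ∃ n, G.adjN n x y := by
  induction G.connected x y with
  | refl => exact ⟨0, rfl⟩
  | tail _ hadj ih =>
    obtain ⟨n, hn⟩ := ih
    exact ⟨n + 1, (G.adjN_add n 1 _ _).2 ⟨_, hn, (G.adjN_one _ _).2 hadj⟩⟩

lemma adjN_dist (x y : Γ) : G.adjN (G.dist x y) x y :=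
  Nat.sInf_mem (G.exists_adjN x y)

lemma dist_le_of_adjN {n : ℕ} {x y : Γ} (h : G.adjN n x y) : G.dist x y ≤ n :=
  Nat.sInf_le h

lemma dist_self (x : Γ) : G.dist x x = 0 :=
  Nat.le_zero.1 (G.dist_le_of_adjN rfl)

lemma eq_of_dist_eq_zero {x y : Γ} (h : G.dist x y = 0) : x = y := by
  simpa [h, adjN] using G.adjN_dist x y

lemma dist_comm (x y : Γ) : G.dist x y = G.dist y x :=
  le_antisymm (G.dist_le_of_adjN (G.adjN_symm (G.adjN_dist y x)))
    (G.dist_le_of_adjN (G.adjN_symm (G.adjN_dist x y)))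

lemma dist_triangle (x y z : Γ) : G.dist x z ≤ G.dist x y + G.dist y z :=
  G.dist_le_of_adjN ((G.adjN_add _ _ _ _).2 ⟨y, G.adjN_dist x y, G.adjN_dist y z⟩)

lemma dist_le_one_of_adj {x y : Γ} (h : G.adj x y) : G.dist x y ≤ 1 :=
  G.dist_le_of_adjN ((G.adjN_one x y).2 h)

lemma closedBall_finite (hp : G.p0cond) (x : Γ) (n : ℕ) : {y | G.dist x y ≤ n}.Finite := by
  induction n with
  | zero =>
    refine (Set.finite_singleton x).subset fun y hy => ?_
    exact (G.eq_of_dist_eq_zero (Nat.le_zero.1 hy)).symm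
  | succ n ih =>
    refine (ih.biUnion fun z _ => (G.adj_finite hp z).union (Set.finite_singleton z)).subset ?_
    intro y hy
    simp only [Set.mem_iUnion, Set.mem_union, Set.mem_singleton_iff, Set.mem_ofPred_eq]
    rcases (Set.mem_ofPred.1 hy).lt_or_eq with hlt | heq
    · exact ⟨y, Nat.lt_succ_iff.1 hlt, Or.inr rfl⟩
    · have h := G.adjN_dist x y
      rw [heq] at h
      obtain ⟨z, hz, hzy⟩ := (G.adjN_add n 1 x y).1 h
      exact ⟨z, G.dist_le_of_adjN hz, Or.inl ((G.adjN_one z y).1 hzy)⟩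

lemma mem_ball {x y : Γ} {r : ℝ} : y ∈ G.ball x r ↔ (G.dist x y : ℝ) < r := Iff.rfl

lemma mem_ball_self {x : Γ} {r : ℝ} (hr : 0 < r) : x ∈ G.ball x r := by
  simpa [mem_ball, G.dist_self] using hr

lemma ball_finite (hp : G.p0cond) (x : Γ) (r : ℝ) : (G.ball x r).Finite :=
  (G.closedBall_finite hp x ⌈r⌉₊).subset fun _ hy =>
    Nat.cast_le.1 ((G.mem_ball.1 hy).le.trans (Nat.le_ceil r))

lemma ball_subset_ball_add_dist (x y : Γ) (r : ℝ) :
    G.ball x r ⊆ G.ball y (r + G.dist y x) := fun z hz => by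
  have : (G.dist y z : ℝ) ≤ G.dist y x + G.dist x z := by exact_mod_cast G.dist_triangle y x z
  rw [mem_ball] at hz ⊢
  linarith

lemma exists_dist_eq (hp : G.p0cond) (x : Γ) (k : ℕ) : ∃ z, G.dist x z = k := by
  have := G.inf
  obtain ⟨y, hy⟩ := (G.closedBall_finite hp x k).infinite_compl.nonempty
  have hky : k ≤ G.dist x y := (not_le.1 (Set.notMem_ofPred_iff.1 hy)).le
  have h := G.adjN_dist x y
  rw [← Nat.add_sub_cancel' hky] at h
  obtain ⟨z, hxz, hzy⟩ := (G.adjN_add k _ x y).1 h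
  refine ⟨z, le_antisymm (G.dist_le_of_adjN hxz) ?_⟩
  have := G.dist_triangle x z y
  have := G.dist_le_of_adjN hzy
  omega

lemma setVol_eq_sum {A : Set Γ} (hA : A.Finite) : G.setVol A = ∑ y ∈ hA.toFinset, G.vtx y := by
  rw [setVol, tsum_subtype A G.vtx, tsum_eq_sum (s := hA.toFinset)]
  · exact Finset.sum_congr rfl fun y hy => Set.indicator_of_mem (hA.mem_toFinset.1 hy) _
  · exact fun y hy => Set.indicator_of_notMem (fun h => hy (hA.mem_toFinset.2 h)) _

lemma setVol_add_le {A B C : Set Γ} (hC : C.Finite) (hAB : Disjoint A B) (hABC : A ∪ B ⊆ C) :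
    G.setVol A + G.setVol B ≤ G.setVol C := by
  have hA := hC.subset (Set.union_subset_iff.1 hABC).1
  have hB := hC.subset (Set.union_subset_iff.1 hABC).2
  rw [G.setVol_eq_sum hA, G.setVol_eq_sum hB, G.setVol_eq_sum hC,
    ← Finset.sum_union (by simpa using hAB)]
  exact Finset.sum_le_sum_of_subset_of_nonneg (by simpa using hABC)
    fun y _ _ => G.vtx_nonneg y

lemma setVol_nonneg (A : Set Γ) : 0 ≤ G.setVol A := tsum_nonneg fun y => G.vtx_nonneg y

lemma setVol_mono {A B : Set Γ} (hB : B.Finite) (hAB : A ⊆ B) : G.setVol A ≤ G.setVol B := by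
  rw [G.setVol_eq_sum (hB.subset hAB), G.setVol_eq_sum hB]
  exact Finset.sum_le_sum_of_subset_of_nonneg (Set.Finite.toFinset_subset_toFinset.2 hAB)
    fun y _ _ => G.vtx_nonneg y

lemma vol_mono (hp : G.p0cond) (x : Γ) {r r' : ℝ} (h : r ≤ r') : G.vol x r ≤ G.vol x r' :=
  G.setVol_mono (G.ball_finite hp x r') fun _ hy => lt_of_lt_of_le hy h

lemma vol_pos (hp : G.p0cond) (x : Γ) {r : ℝ} (hr : 0 < r) : 0 < G.vol x r := by
  have hB := G.ball_finite hp x r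
  rw [vol, G.setVol_eq_sum hB]
  exact (G.vtx_pos hp x).trans_le (Finset.single_le_sum (fun y _ => G.vtx_nonneg y)
    (hB.mem_toFinset.2 (G.mem_ball_self hr)))

lemma exists_one_add_mul_vol_le (hp : G.p0cond) (hVD : G.VD) :
    ∃ η > (0:ℝ), ∀ (x : Γ) (s : ℕ), 0 < s →
      (1 + η) * G.vol x (2 * s) ≤ G.vol x (4 * s) := by
  obtain ⟨D, hD, hVD⟩ := hVD
  refine ⟨(D ^ 3)⁻¹, by positivity, fun x s hs => ?_⟩
  have hs : (0:ℝ) < s := by exact_mod_cast hs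
  -- a ball of radius s centred at distance 3s from x fills a fixed proportion of the annulus
  obtain ⟨z, hz⟩ := G.exists_dist_eq hp x (3 * s)
  have hxz : (G.dist x z : ℝ) = 3 * s := by exact_mod_cast hz
  have hdisj : Disjoint (G.ball x (2 * s)) (G.ball z s) := Set.disjoint_left.2 fun y h1 h2 => by
    have : (G.dist x z : ℝ) ≤ G.dist x y + G.dist z y := by
      rw [G.dist_comm z y]; exact_mod_cast G.dist_triangle x y z
    rw [mem_ball] at h1 h2
    linarith
  have hsub : G.ball x (2 * s) ∪ G.ball z s ⊆ G.ball x (4 * s) := by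
    refine Set.union_subset (fun y hy => ?_)
      ((G.ball_subset_ball_add_dist z x s).trans fun y hy => ?_)
    all_goals rw [mem_ball] at hy ⊢
    · linarith
    · linarith
  have hdouble (r : ℝ) (hr : 0 < r) : G.vol z (2 * r) ≤ D * G.vol z r := hVD z r hr
  have hVz : G.vol x (4 * s) ≤ D ^ 3 * G.vol z s := by
    have hsub' : G.ball x (4 * s) ⊆ G.ball z (2 * (2 * (2 * s))) := by
      refine (G.ball_subset_ball_add_dist x z _).trans fun y hy => ?_
      simp only [mem_ball, G.dist_comm z x, hxz] at hy ⊢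
      linarith
    calc G.vol x (4 * s) ≤ G.vol z (2 * (2 * (2 * s))) :=
          G.setVol_mono (G.ball_finite hp z _) hsub'
      _ ≤ D * G.vol z (2 * (2 * s)) := hdouble _ (by positivity)
      _ ≤ D * (D * G.vol z (2 * s)) := by gcongr; exact hdouble _ (by positivity)
      _ ≤ D * (D * (D * G.vol z s)) := by gcongr; exact hdouble _ hs
      _ = D ^ 3 * G.vol z s := by ring
  have hunion := G.setVol_add_le (G.ball_finite hp x _) hdisj hsub
  have h24 := G.vol_mono hp x (show 2 * (s:ℝ) ≤ 4 * s by linarith)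
  have hη : (D ^ 3)⁻¹ * G.vol x (4 * s) ≤ G.vol z s := by
    rwa [inv_mul_le_iff₀ (by positivity)]
  have : (D ^ 3)⁻¹ * G.vol x (2 * s) ≤ (D ^ 3)⁻¹ * G.vol x (4 * s) := by gcongr
  rw [vol, vol] at *
  linarith

lemma exists_mul_vol_le_vol (hp : G.p0cond) (hVD : G.VD) (C : ℝ) :
    ∃ M : ℕ, 0 < M ∧ ∀ (x : Γ) (R : ℕ), 0 < R →
      C * G.vol x R ≤ G.vol x ((M * R : ℕ) : ℝ) := by
  obtain ⟨η, hη, hrev⟩ := G.exists_one_add_mul_vol_le hp hVD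
  obtain ⟨J, hJ⟩ := pow_unbounded_of_one_lt C (by linarith : 1 < 1 + η)
  refine ⟨2 ^ (J + 1), by positivity, fun x R hR => ?_⟩
  have hgrowth (j : ℕ) : (1 + η) ^ j * G.vol x (2 * R) ≤ G.vol x (2 ^ (j + 1) * R) := by
    induction j with
    | zero => simp
    | succ j ih =>
      have := hrev x (2 ^ j * R) (by positivity)
      push_cast at this
      calc (1 + η) ^ (j + 1) * G.vol x (2 * R) = (1 + η) * ((1 + η) ^ j * G.vol x (2 * R)) := by
            ring
        _ ≤ (1 + η) * G.vol x (2 ^ (j + 1) * R) := by gcongr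
        _ = (1 + η) * G.vol x (2 * (2 ^ j * R)) := by ring_nf
        _ ≤ G.vol x (4 * (2 ^ j * R)) := this
        _ = G.vol x (2 ^ (j + 1 + 1) * R) := by ring_nf
  have hV := G.setVol_nonneg (G.ball x R)
  calc C * G.vol x R ≤ (1 + η) ^ J * G.vol x R := by gcongr
    _ ≤ (1 + η) ^ J * G.vol x (2 * R) := by gcongr; exact G.vol_mono hp x (by linarith)
    _ ≤ _ := by push_cast; exact hgrowth J

def closedBallFinset (hp : G.p0cond) (x : Γ) (n : ℕ) : Finset Γ :=
  (G.closedBall_finite hp x n).toFinset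

lemma mem_closedBallFinset {hp : G.p0cond} {x y : Γ} {n : ℕ} :
    y ∈ G.closedBallFinset hp x n ↔ G.dist x y ≤ n := by
  simp [closedBallFinset]

lemma transP_zero (x y : Γ) : G.transP 0 x y = if x = y then 1 else 0 := by
  simp [transP, killedP]

lemma transP_succ (n : ℕ) (x y : Γ) :
    G.transP (n + 1) x y = ∑' z, G.kerP x z * G.transP n z y := by
  simp [transP, killedP]

lemma transP_one (x y : Γ) : G.transP 1 x y = G.kerP x y := by
  rw [transP_succ, tsum_eq_single y fun z hz => by simp [transP_zero, hz]]
  simp [transP_zero]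

lemma transP_nonneg (n : ℕ) (x y : Γ) : 0 ≤ G.transP n x y := by
  induction n generalizing x with
  | zero => rw [transP_zero]; positivity
  | succ n ih =>
    rw [transP_succ]
    exact tsum_nonneg fun z => mul_nonneg (G.kerP_nonneg x z) (ih z)

lemma transP_eq_zero_of_lt_dist {n : ℕ} {x y : Γ} (h : n < G.dist x y) :
    G.transP n x y = 0 := by
  induction n generalizing x with
  | zero =>
    rw [transP_zero, if_neg]
    rintro rfl
    simp [G.dist_self] at h
  | succ n ih =>
    rw [transP_succ]
    refine (tsum_congr fun z => ?_).trans tsum_zero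
    by_cases hz : G.adj x z
    · have := G.dist_triangle x z y
      have := G.dist_le_one_of_adj hz
      rw [ih (by omega), mul_zero]
    · rw [G.kerP_eq_zero_of_not_adj hz, zero_mul]

lemma transP_add (hp : G.p0cond) (m n : ℕ) (x y : Γ) :
    G.transP (m + n) x y = ∑' z, G.transP m x z * G.transP n z y := by
  induction m generalizing x with
  | zero =>
    rw [zero_add, tsum_eq_single x fun z hz => by simp [transP_zero, Ne.symm hz]]
    simp [transP_zero]
  | succ m ih =>
    have hfin : ∀ z w, G.kerP x z * G.transP m z w * G.transP n w y ≠ 0 →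
        z ∈ G.closedBallFinset hp x 1 ∧ w ∈ G.closedBallFinset hp x (m + 1) := by
      intro z w h
      have hxz : G.adj x z := by_contra fun hz => h (by simp [G.kerP_eq_zero_of_not_adj hz])
      have hzw : G.dist z w ≤ m := by
        by_contra hzw
        exact h (by simp [G.transP_eq_zero_of_lt_dist (not_le.1 hzw)])
      have := G.dist_triangle x z w
      have := G.dist_le_one_of_adj hxz
      exact ⟨G.mem_closedBallFinset.2 (by omega), G.mem_closedBallFinset.2 (by omega)⟩
    calc G.transP (m + 1 + n) x y
        = ∑' z, ∑' w, G.kerP x z * G.transP m z w * G.transP n w y := by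
          rw [show m + 1 + n = m + n + 1 by omega, transP_succ]
          simp only [ih, ← tsum_mul_left, mul_assoc]
      _ = ∑' w, ∑' z, G.kerP x z * G.transP m z w * G.transP n w y := by
          rw [tsum_tsum_eq_sum_sum _ _ hfin, Finset.sum_comm,
            tsum_tsum_eq_sum_sum _ _ fun w z h => (hfin z w h).symm]
      _ = ∑' w, G.transP (m + 1) x w * G.transP n w y := by
          simp only [transP_succ, ← tsum_mul_right]

lemma vtx_mul_transP_comm (hp : G.p0cond) (n : ℕ) (x y : Γ) :
    G.vtx x * G.transP n x y = G.vtx y * G.transP n y x := by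
  induction n generalizing x y with
  | zero => by_cases h : x = y <;> simp [transP_zero, h, eq_comm]
  | succ n ih =>
    rw [transP_succ, G.transP_add hp n 1, ← tsum_mul_left, ← tsum_mul_left]
    refine tsum_congr fun z => ?_
    have hx := (G.vtx_pos hp x).ne'
    have hz := (G.vtx_pos hp z).ne'
    rw [transP_one, kerP, kerP, G.w_symm x z]
    field_simp
    linear_combination G.w z x * ih z y

lemma hk_nonneg (n : ℕ) (x y : Γ) : 0 ≤ G.hk n x y :=
  div_nonneg (G.transP_nonneg n x y) (G.vtx_nonneg y)

lemma hk_two_mul_eq_sum (hp : G.p0cond) (n : ℕ) (z w : Γ) (T : Finset Γ)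
    (hT : ∀ y, G.dist z y ≤ n → y ∈ T) :
    G.hk (2 * n) z w = ∑ y ∈ T, G.hk n z y * G.hk n w y * G.vtx y := by
  rw [hk, two_mul, G.transP_add hp, ← tsum_div_const, tsum_eq_sum fun y hy => ?_]
  · refine Finset.sum_congr rfl fun y _ => ?_
    have hy := (G.vtx_pos hp y).ne'
    have hw := (G.vtx_pos hp w).ne'
    rw [hk, hk]
    field_simp
    linear_combination G.transP n z y * G.vtx_mul_transP_comm hp n y w
  · rw [G.transP_eq_zero_of_lt_dist (not_le.1 fun h => hy (hT y h)), zero_mul, zero_div]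

lemma hk_two_mul_le (hp : G.p0cond) (n : ℕ) (z w : Γ) :
    G.hk (2 * n) z w ≤ (G.hk (2 * n) z z + G.hk (2 * n) w w) / 2 := by
  set T := G.closedBallFinset hp z n ∪ G.closedBallFinset hp w n
  have hz (y) (h : G.dist z y ≤ n) : y ∈ T :=
    Finset.mem_union_left _ (G.mem_closedBallFinset.2 h)
  have hw (y) (h : G.dist w y ≤ n) : y ∈ T :=
    Finset.mem_union_right _ (G.mem_closedBallFinset.2 h)
  rw [G.hk_two_mul_eq_sum hp n z w T hz, G.hk_two_mul_eq_sum hp n z z T hz,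
    G.hk_two_mul_eq_sum hp n w w T hw, ← Finset.sum_add_distrib, Finset.sum_div]
  refine Finset.sum_le_sum fun y _ => ?_
  have := G.vtx_nonneg y
  nlinarith [mul_nonneg this (sq_nonneg (G.hk n z y - G.hk n w y))]

def heatPairing (f : Γ → ℝ) (k : ℕ) : ℝ :=
  ∑' z, ∑' w, f z * G.vtx z * G.transP k z w * f w

lemma heatPairing_zero (f : Γ → ℝ) : G.heatPairing f 0 = ∑' y, f y ^ 2 * G.vtx y := by
  refine tsum_congr fun z => ?_
  rw [tsum_eq_single z fun w hw => by simp [transP_zero, Ne.symm hw]]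
  simp [transP_zero]
  ring

section FiniteSupport

variable {G} {f : Γ → ℝ} {s : Finset Γ}

lemma heatPairing_eq_sum (hfs : ∀ y ∉ s, f y = 0) (k : ℕ) :
    G.heatPairing f k = ∑ z ∈ s, ∑ w ∈ s, f z * G.vtx z * G.transP k z w * f w := by
  refine tsum_tsum_eq_sum_sum s s fun z w h => ⟨?_, ?_⟩ <;> by_contra hn <;>
    simp [hfs _ hn] at h

lemma heatPairing_add_eq_sum (hp : G.p0cond) (hfs : ∀ y ∉ s, f y = 0) (a b : ℕ)
    (T : Finset Γ) (hT : ∀ z ∈ s, ∀ y, G.dist z y ≤ a → y ∈ T) :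
    G.heatPairing f (a + b) = ∑ y ∈ T,
      (∑ z ∈ s, G.transP a y z * f z) * (∑ w ∈ s, G.transP b y w * f w) * G.vtx y := by
  calc G.heatPairing f (a + b)
      = ∑ z ∈ s, ∑ w ∈ s, ∑ y ∈ T,
          G.transP a y z * f z * (G.transP b y w * f w) * G.vtx y := by
        rw [heatPairing_eq_sum hfs]
        refine Finset.sum_congr rfl fun z hz => Finset.sum_congr rfl fun w _ => ?_
        rw [G.transP_add hp, tsum_eq_sum (s := T) fun y hy => ?_, Finset.mul_sum, Finset.sum_mul]
        · refine Finset.sum_congr rfl fun y _ => ?_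
          linear_combination (f z * G.transP b y w * f w) * G.vtx_mul_transP_comm hp a z y
        · rw [G.transP_eq_zero_of_lt_dist (not_le.1 fun h => hy (hT z hz y h)), zero_mul]
    _ = ∑ y ∈ T, ∑ z ∈ s, ∑ w ∈ s,
          G.transP a y z * f z * (G.transP b y w * f w) * G.vtx y :=
        (Finset.sum_congr rfl fun z _ => Finset.sum_comm).trans Finset.sum_comm
    _ = _ := Finset.sum_congr rfl fun y _ => by
        rw [Finset.sum_mul_sum, Finset.sum_mul]
        simp only [Finset.sum_mul]

lemma heatPairing_add_sq_le (hp : G.p0cond) (hfs : ∀ y ∉ s, f y = 0) (a b : ℕ) :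
    G.heatPairing f (a + b) ^ 2 ≤ G.heatPairing f (a + a) * G.heatPairing f (b + b) := by
  set T := s.biUnion fun z => G.closedBallFinset hp z (a + b)
  have hT (c : ℕ) (hc : c ≤ a + b) : ∀ z ∈ s, ∀ y, G.dist z y ≤ c → y ∈ T :=
    fun z hz y hy => Finset.mem_biUnion.2 ⟨z, hz, G.mem_closedBallFinset.2 (by omega)⟩
  rw [heatPairing_add_eq_sum hp hfs a b T (hT a (by omega)),
    heatPairing_add_eq_sum hp hfs a a T (hT a (by omega)),
    heatPairing_add_eq_sum hp hfs b b T (hT b (by omega))]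
  exact Finset.sum_sq_le_sum_mul_sum_of_sq_le_mul T
    (fun y _ => mul_nonneg (mul_self_nonneg _) (G.vtx_nonneg y))
    (fun y _ => mul_nonneg (mul_self_nonneg _) (G.vtx_nonneg y)) fun y _ => le_of_eq (by ring)

lemma heatPairing_two_mul_le (hp : G.p0cond) (hfs : ∀ y ∉ s, f y = 0) (n : ℕ) {M : ℝ}
    (hM : 0 ≤ M) (hdiag : ∀ y ∈ s, G.hk (2 * n) y y ≤ M) :
    G.heatPairing f (2 * n) ≤ M * (∑ y ∈ s, G.vtx y) * ∑' y, f y ^ 2 * G.vtx y := by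
  have hterm : ∀ z ∈ s, ∀ w ∈ s, f z * G.vtx z * G.transP (2 * n) z w * f w
      ≤ M * ((|f z| * G.vtx z) * (|f w| * G.vtx w)) := by
    intro z hz w hw
    have hk_le : G.hk (2 * n) z w ≤ M := by
      linarith [G.hk_two_mul_le hp n z w, hdiag z hz, hdiag w hw]
    have hμ : G.transP (2 * n) z w = G.hk (2 * n) z w * G.vtx w := by
      rw [hk, div_mul_cancel₀ _ (G.vtx_pos hp w).ne']
    have hf : f z * f w ≤ |f z| * |f w| := by rw [← abs_mul]; exact le_abs_self _
    have hvz := G.vtx_nonneg z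
    have hvw := G.vtx_nonneg w
    have hk0 := G.hk_nonneg (2 * n) z w
    rw [hμ]
    calc f z * G.vtx z * (G.hk (2 * n) z w * G.vtx w) * f w
        = (f z * f w) * (G.vtx z * G.vtx w) * G.hk (2 * n) z w := by ring
      _ ≤ (|f z| * |f w|) * (G.vtx z * G.vtx w) * M := by gcongr
      _ = M * ((|f z| * G.vtx z) * (|f w| * G.vtx w)) := by ring
  have hCS : (∑ z ∈ s, |f z| * G.vtx z) ^ 2 ≤
      (∑ y ∈ s, G.vtx y) * ∑ y ∈ s, f y ^ 2 * G.vtx y :=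
    Finset.sum_sq_le_sum_mul_sum_of_sq_le_mul s (fun y _ => G.vtx_nonneg y)
      (fun y _ => mul_nonneg (sq_nonneg _) (G.vtx_nonneg y))
      fun y _ => le_of_eq (by rw [mul_pow, sq_abs]; ring)
  rw [heatPairing_eq_sum hfs, tsum_eq_sum fun y hy => by rw [hfs y hy]; ring]
  calc ∑ z ∈ s, ∑ w ∈ s, f z * G.vtx z * G.transP (2 * n) z w * f w
      ≤ ∑ z ∈ s, ∑ w ∈ s, M * ((|f z| * G.vtx z) * (|f w| * G.vtx w)) :=
        Finset.sum_le_sum fun z hz => Finset.sum_le_sum fun w hw => hterm z hz w hw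
    _ = M * (∑ z ∈ s, |f z| * G.vtx z) ^ 2 := by
        rw [sq, Finset.sum_mul_sum, Finset.mul_sum]
        simp only [Finset.mul_sum]
    _ ≤ _ := by rw [mul_assoc]; gcongr

lemma heatPairing_one (hp : G.p0cond) (hfs : ∀ y ∉ s, f y = 0)
    (hnbr : ∀ a b, G.adj a b → f a ≠ 0 → b ∈ s) :
    G.heatPairing f 1 = ∑' y, f y ^ 2 * G.vtx y - G.dform f := by
  have hmem (a : Γ) (ha : f a ≠ 0) : a ∈ s := by_contra fun h => ha (hfs a h)
  have hE : 2 * G.dform f = ∑ a ∈ s, ∑ b ∈ s, G.w a b * (f a - f b) ^ 2 := by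
    rw [dform, ← mul_assoc, show (2:ℝ) * (1 / 2) = 1 by norm_num, one_mul,
      ← Finset.sum_product' (f := fun a b => G.w a b * (f a - f b) ^ 2)]
    refine tsum_eq_sum fun p hp' => ?_
    by_cases hadj : G.adj p.1 p.2
    · have h1 : f p.1 = 0 := by_contra fun h =>
        hp' (Finset.mem_product.2 ⟨hmem _ h, hnbr _ _ hadj h⟩)
      have h2 : f p.2 = 0 := by_contra fun h =>
        hp' (Finset.mem_product.2 ⟨hnbr _ _ (G.adj_symm _ _ hadj) h, hmem _ h⟩)
      simp [h1, h2]
    · simp [G.w_zero _ _ hadj]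
  have hS : ∑' y, f y ^ 2 * G.vtx y = ∑ a ∈ s, ∑ b ∈ s, G.w a b * f a ^ 2 := by
    rw [tsum_eq_sum fun y hy => by simp [hfs y hy]]
    refine Finset.sum_congr rfl fun a _ => ?_
    by_cases ha : f a = 0
    · simp [ha]
    rw [← Finset.sum_mul, vtx, mul_comm, tsum_eq_sum fun b hb => G.w_zero _ _ fun h =>
      hb (hnbr a b h ha)]
  have hS' :
      ∑ a ∈ s, ∑ b ∈ s, G.w a b * f b ^ 2 = ∑ a ∈ s, ∑ b ∈ s, G.w a b * f a ^ 2 := by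
    rw [Finset.sum_comm]
    simp only [G.w_symm]
  have hQ : G.heatPairing f 1 = ∑ a ∈ s, ∑ b ∈ s, G.w a b * (f a * f b) := by
    rw [heatPairing_eq_sum hfs]
    refine Finset.sum_congr rfl fun a _ => Finset.sum_congr rfl fun b _ => ?_
    have := (G.vtx_pos hp a).ne'
    rw [transP_one, kerP]
    field_simp
  have hexpand : ∑ a ∈ s, ∑ b ∈ s, G.w a b * (f a - f b) ^ 2 =
      ∑ a ∈ s, ∑ b ∈ s, G.w a b * f a ^ 2 + ∑ a ∈ s, ∑ b ∈ s, G.w a b * f b ^ 2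
        - 2 * ∑ a ∈ s, ∑ b ∈ s, G.w a b * (f a * f b) := by
    simp only [Finset.mul_sum, ← Finset.sum_add_distrib, ← Finset.sum_sub_distrib]
    exact Finset.sum_congr rfl fun a _ => Finset.sum_congr rfl fun b _ => by ring
  linarith

end FiniteSupport

lemma dform_nonneg (f : Γ → ℝ) : 0 ≤ G.dform f :=
  mul_nonneg (by norm_num) (tsum_nonneg fun p => mul_nonneg (G.w_nonneg _ _) (sq_nonneg _))

-- The ratios `Q (2k+2) / Q (2k)` increase, and the first one is at least `a ^ 2`.
lemma pow_mul_le_of_sq_le_mul {Q : ℕ → ℝ} {a : ℝ} (ha : 0 < a) (hQ0 : 0 < Q 0)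
    (hQ1 : Q 1 = a * Q 0) (hCS : ∀ i j, Q (i + j) ^ 2 ≤ Q (i + i) * Q (j + j)) (k : ℕ) :
    a ^ (2 * k) * Q 0 ≤ Q (2 * k) := by
  have hstep (k : ℕ) : 0 < Q (2 * k) ∧ a ^ 2 * Q (2 * k) ≤ Q (2 * k + 2) := by
    induction k with
    | zero =>
      have := hCS 0 1
      simp only [zero_add, hQ1] at this
      exact ⟨hQ0, le_of_mul_le_mul_right (by nlinarith) hQ0⟩
    | succ k ih =>
      obtain ⟨hpos, hle⟩ := ih
      have hpos' : 0 < Q (2 * (k + 1)) := by rw [mul_add_one]; nlinarith [pow_pos ha 2]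
      have := hCS k (k + 2)
      rw [show k + (k + 2) = 2 * (k + 1) by ring, ← two_mul,
        show k + 2 + (k + 2) = 2 * (k + 1) + 2 by ring] at this
      refine ⟨hpos', le_of_mul_le_mul_right ?_ hpos⟩
      rw [mul_add_one] at hpos' this ⊢
      nlinarith
  induction k with
  | zero => simp
  | succ k ih =>
    rw [mul_add_one, pow_add]
    nlinarith [(hstep k).2, pow_pos ha 2]

lemma le_four_mul_of_sq_le_mul {Q : ℕ → ℝ} {S E : ℝ} (hE : 0 ≤ E) (hQ0 : Q 0 = S)
    (hQ1 : Q 1 = S - E) (hCS : ∀ i j, Q (i + j) ^ 2 ≤ Q (i + i) * Q (j + j)) {n : ℕ} (hn : 0 < n)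
    (hQn : Q (2 * n) ≤ S / 2) :
    S ≤ 4 * n * E := by
  rcases le_or_gt S E with hSE | hES
  · nlinarith [show (1:ℝ) ≤ n by exact_mod_cast hn]
  have hS : 0 < S := hE.trans_lt hES
  set ρ := E / S
  have hρS : ρ * S = E := div_mul_cancel₀ E hS.ne'
  have hρ1 : ρ < 1 := (div_lt_one hS).2 hES
  have hρ0 : 0 ≤ ρ := div_nonneg hE hS.le
  have hgeo : (1 - ρ) ^ (2 * n) * S ≤ Q (2 * n) := by
    rw [← hQ0]
    refine pow_mul_le_of_sq_le_mul (by linarith) (by rwa [hQ0]) ?_ hCS n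
    rw [hQ1, hQ0, sub_mul, one_mul, hρS]
  have hbern := one_add_mul_le_pow (a := -ρ) (by linarith) (2 * n)
  rw [← sub_eq_add_neg, mul_neg, ← sub_eq_add_neg] at hbern
  push_cast at hbern
  have hexp : (1 - 2 * n * ρ) * S = S - 2 * n * E := by rw [← hρS]; ring
  linarith [mul_le_mul_of_nonneg_right hbern hS.le]

lemma sum_sq_le_of_hk_le (hp : G.p0cond) {x : Γ} {R : ℕ} {f : Γ → ℝ}
    (hf : ∀ y ∉ G.ball x R, f y = 0) {n : ℕ} (hn : 0 < n)
    (hdiag : ∀ y ∈ G.ball x R, G.hk (2 * n) y y ≤ (2 * G.vol x R)⁻¹) :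
    ∑' y, f y ^ 2 * G.vtx y ≤ 4 * n * G.dform f := by
  set S := ∑' y, f y ^ 2 * G.vtx y
  have hB := G.ball_finite hp x R
  have hfs (y : Γ) (hy : y ∉ hB.toFinset) : f y = 0 := hf y (by simpa using hy)
  have hQ1 : G.heatPairing f 1 = S - G.dform f := by
    refine heatPairing_one (s := G.closedBallFinset hp x R) hp (fun y hy => hf y fun h => hy ?_)
      fun a b hab ha => G.mem_closedBallFinset.2 ?_
    · exact G.mem_closedBallFinset.2 (Nat.cast_le.1 (G.mem_ball.1 h).le)
    · have := G.dist_triangle x a b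
      have := G.dist_le_one_of_adj hab
      have : G.dist x a < R := by exact_mod_cast G.mem_ball.1 (by_contra fun h => ha (hf a h))
      omega
  have hQn : G.heatPairing f (2 * n) ≤ S / 2 := by
    have hV : G.vol x R = ∑ y ∈ hB.toFinset, G.vtx y := G.setVol_eq_sum hB
    have hVM : (2 * G.vol x R)⁻¹ * G.vol x R ≤ 1 / 2 := by
      rcases eq_or_ne (G.vol x R) 0 with h | h
      · simp [h]
      · rw [mul_inv, mul_assoc, inv_mul_cancel₀ h]; norm_num
    have hS : 0 ≤ S := tsum_nonneg fun y => mul_nonneg (sq_nonneg _) (G.vtx_nonneg y)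
    calc G.heatPairing f (2 * n) ≤ (2 * G.vol x R)⁻¹ * G.vol x R * S := by
          nth_rw 2 [hV]
          exact heatPairing_two_mul_le hp hfs n
            (inv_nonneg.2 (mul_nonneg zero_le_two (G.setVol_nonneg _)))
            fun y hy => hdiag y (by simpa using hy)
      _ ≤ S / 2 := by nlinarith
  exact le_four_mul_of_sq_le_mul (G.dform_nonneg f) (G.heatPairing_zero f) hQ1
    (heatPairing_add_sq_le hp hfs) hn hQn

lemma inv_le_lam (hp : G.p0cond) {A : Set Γ} (hA : A.Finite) {x : Γ} (hx : x ∈ A) {C : ℝ}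
    (hC : 0 < C) (h : ∀ f : Γ → ℝ, f ≠ 0 → (∀ y ∉ A, f y = 0) →
      ∑' y, f y ^ 2 * G.vtx y ≤ C * G.dform f) :
    C⁻¹ ≤ G.lam A := by
  refine le_csInf ⟨_, fun y => if y = x then 1 else 0, fun h => by simpa using congrFun h x,
    fun y hy => if_neg fun h : y = x => hy (h ▸ hx), rfl⟩ ?_
  rintro _ ⟨f, hf0, hfA, rfl⟩
  obtain ⟨y, hy⟩ := Function.ne_iff.1 hf0
  have hS : 0 < ∑' y, f y ^ 2 * G.vtx y :=
    Summable.tsum_pos (summable_of_ne_finset_zero (s := hA.toFinset) fun z hz => by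
        simp [hfA z (by simpa using hz)])
      (fun z => mul_nonneg (sq_nonneg _) (G.vtx_nonneg z)) y
      (mul_pos (sq_pos_of_ne_zero hy) (G.vtx_pos hp y))
  rw [le_div_iff₀ hS, inv_mul_le_iff₀ hC]
  exact h f hf0 hfA

lemma le_invF' {F : Γ → ℕ → ℝ} {y : Γ} {L m : ℕ} (hmono : Monotone (F y))
    (hm : ∃ R, (m : ℝ) ≤ F y R) (hL : F y L < m) : L ≤ invF' F y m := by
  by_contra hlt
  exact (hL.trans_le (Nat.sInf_mem hm)).not_ge (hmono (not_le.1 hlt).le)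

lemma exists_mul_le_invF' {F : Γ → ℕ → ℝ} (hF : G.memW0 F) {L : ℕ} (hL : 1 < L) :
    ∃ K > (0:ℝ), ∀ (x y : Γ) (R n : ℕ), 0 < R → G.dist x y < R → 0 < n → K * F x R ≤ n →
      L * R ≤ invF' F y (2 * n) := by
  obtain ⟨⟨β, -, β', -, cF, -, CF, hCF, hreg⟩, ⟨c₀, hc₀, hlow⟩, hmono⟩ := hF
  have hmono' (y : Γ) : Monotone (F y) := monotone_nat_of_le_succ fun R => by
    linarith [hmono y R]
  have hunbdd (y : Γ) (t : ℝ) : ∃ R, t ≤ F y R := by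
    obtain ⟨m, hm⟩ := exists_nat_ge (t / c₀)
    refine ⟨m + 1, le_trans ?_ (hlow y _)⟩
    rw [div_le_iff₀ hc₀] at hm
    push_cast
    nlinarith [mul_nonneg hc₀.le (by positivity : (0:ℝ) ≤ m ^ 2 + m + 1)]
  refine ⟨CF * (L : ℝ) ^ β, mul_pos hCF (Real.rpow_pos_of_pos (by positivity) β),
    fun x y R n hR hxy hn hK => le_invF' (hmono' y) (hunbdd y _) ?_⟩
  have hFx : 0 < F x R := lt_of_lt_of_le (by positivity) (hlow x R)
  have hFy := (hreg y x (L * R) R hR (by nlinarith) (by rw [G.dist_comm]; nlinarith)).2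
  rw [div_le_iff₀ hFx, Nat.cast_mul, mul_div_cancel_right₀ _ (by positivity)] at hFy
  have : (0:ℝ) < n := by exact_mod_cast hn
  push_cast
  linarith

lemma exists_hk_two_mul_le (hp : G.p0cond) (hVD : G.VD) {F : Γ → ℕ → ℝ} (hF : G.memW0 F)
    (hDUE : G.DUE F) :
    ∃ K > (0:ℝ), ∀ (x : Γ) (R : ℕ), 0 < R → ∃ n : ℕ, 0 < n ∧ (n : ℝ) ≤ K * F x R ∧
      ∀ y ∈ G.ball x R, G.hk (2 * n) y y ≤ (2 * G.vol x R)⁻¹ := by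
  obtain ⟨C, hC, hdue⟩ := hDUE
  obtain ⟨M, hM, hvol⟩ := G.exists_mul_vol_le_vol hp hVD (2 * C)
  obtain ⟨K, hK, hinv⟩ := G.exists_mul_le_invF' hF (L := M + 1) (by omega)
  obtain ⟨-, ⟨c₀, hc₀, hlow⟩, -⟩ := hF
  refine ⟨K + 1 / c₀, by positivity, fun x R hR => ?_⟩
  have hR1 : (1:ℝ) ≤ R := by exact_mod_cast hR
  have hFx : c₀ ≤ F x R := by
    nlinarith [hlow x R, mul_le_mul_of_nonneg_left (one_le_pow₀ hR1 : (1:ℝ) ≤ R ^ 2) hc₀.le]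
  have hFpos : 0 < F x R := hc₀.trans_le hFx
  set n := ⌈K * F x R⌉₊
  have hn : 0 < n := Nat.ceil_pos.2 (by positivity)
  refine ⟨n, hn, ?_, fun y hy => ?_⟩
  · have := Nat.ceil_lt_add_one (show 0 ≤ K * F x R by positivity)
    have : 1 ≤ 1 / c₀ * F x R := by rw [one_div_mul_eq_div, le_div_iff₀ hc₀]; linarith
    linarith
  have hxy : G.dist x y < R := by exact_mod_cast G.mem_ball.1 hy
  have hV : 2 * C * G.vol x R ≤ G.vol y (invF' F y (2 * n)) :=
    calc 2 * C * G.vol x R ≤ G.vol x ((M * R : ℕ) : ℝ) := hvol x R hR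
      _ ≤ G.vol y ((M * R : ℕ) + G.dist y x) :=
          G.setVol_mono (G.ball_finite hp y _) (G.ball_subset_ball_add_dist x y _)
      _ ≤ G.vol y (invF' F y (2 * n)) := G.vol_mono hp y <| by
          have := hinv x y R n hR hxy hn (Nat.le_ceil _)
          rw [G.dist_comm]
          exact_mod_cast (show M * R + G.dist x y ≤ invF' F y (2 * n) by nlinarith)
  have hV0 := G.vol_pos hp x (r := R) (by positivity)
  calc G.hk (2 * n) y y ≤ C / G.vol y (invF' F y (2 * n)) := hdue y (2 * n) (by omega)
    _ ≤ C / (2 * C * G.vol x R) := by gcongr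
    _ = (2 * G.vol x R)⁻¹ := by field_simp

end WGraph

/-- under (p0) and (VD), if F ∈ W₀ and DUE(F) holds, then
λ(x,R) ≥ c/F(x,R). -/
theorem statement13 {Γ : Type*} (G : WGraph Γ) (hp0 : G.p0cond) (hVD : G.VD)
    (F : Γ → ℕ → ℝ) (hF : G.memW0 F) (hDUE : G.DUE F) :
    ∃ c > (0:ℝ), ∀ (x : Γ) (R : ℕ), 0 < R →
      c / F x R ≤ G.lam (G.ball x (R:ℝ)) := by
  obtain ⟨K, hK, hscale⟩ := G.exists_hk_two_mul_le hp0 hVD hF hDUE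
  refine ⟨(4 * K)⁻¹, by positivity, fun x R hR => ?_⟩
  obtain ⟨n, hn, hnK, hdiag⟩ := hscale x R hR
  have hFpos : 0 < F x R := pos_of_mul_pos_right ((Nat.cast_pos.2 hn).trans_le hnK) hK.le
  rw [div_eq_mul_inv, ← mul_inv]
  refine G.inv_le_lam hp0 (G.ball_finite hp0 x R) (G.mem_ball_self (by positivity))
    (by positivity) fun f _ hf => ?_
  calc ∑' y, f y ^ 2 * G.vtx y ≤ 4 * n * G.dform f := G.sum_sq_le_of_hk_le hp0 hf hn hdiag
    _ ≤ 4 * K * F x R * G.dform f :=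
        mul_le_mul_of_nonneg_right (by linarith) (G.dform_nonneg f)
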